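/- arXiv:2501.18939 — 4 statements merged into one kernel-verified Lean document; each statement's English description precedes it below -/
import Mathlib

section
/- Let σ > 0, τ_e = 1/(6σ), let ρ_f : [0, τ_e] → [0,1] be the continuous strictly increasing function satisfying (3ρ_f(τ)² − 2ρ_f(τ)³)/(6σ) = τ, and let Q(τ) = σ (1 − ρ_f(τ)) / ρ_f(τ) for τ ∈ (0, τ_e). Then Q is (improperly) integrable on (0, τ_e) and ∫₀^{τ_e} Q(τ) dτ = 1/3; that is, the total volume of liquid imbibed equals the dimensionless pore volume ∫₀¹ (1 − ρ)² dρ of the spherical pellet. -/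
/-- With σ > 0, τ_e = 1/(6σ), ρ_f as above and
Q(τ) = σ(1 − ρ_f(τ))/ρ_f(τ) on (0, τ_e), Q is integrable on (0, τ_e) and
∫₀^{τ_e} Q = 1/3, the dimensionless pore volume ∫₀¹ (1 − ρ)² dρ of the pellet. -/
theorem total_imbibed_volume (σ : ℝ) (hσ : 0 < σ) (ρf : ℝ → ℝ)
    (hcont : ContinuousOn ρf (Set.Icc 0 (1 / (6 * σ))))
    (hmono : StrictMonoOn ρf (Set.Icc 0 (1 / (6 * σ))))
    (hmaps : Set.MapsTo ρf (Set.Icc 0 (1 / (6 * σ))) (Set.Icc 0 1))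
    (heq : ∀ τ ∈ Set.Icc (0 : ℝ) (1 / (6 * σ)),
      (3 * (ρf τ) ^ 2 - 2 * (ρf τ) ^ 3) / (6 * σ) = τ)
    (Q : ℝ → ℝ)
    (hQ : ∀ τ ∈ Set.Ioo (0 : ℝ) (1 / (6 * σ)),
      Q τ = σ * (1 - ρf τ) / ρf τ) :
    MeasureTheory.IntegrableOn Q (Set.Ioo 0 (1 / (6 * σ))) ∧
    (∫ τ in Set.Ioo (0 : ℝ) (1 / (6 * σ)), Q τ) = 1 / 3 ∧
    (∫ ρ in (0 : ℝ)..1, (1 - ρ) ^ 2) = 1 / 3 := by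
  have h6σ : (0:ℝ) < 6 * σ := by linarith
  set b : ℝ := 1 / (6 * σ) with hb
  have hb0 : 0 < b := by positivity
  -- basic bounds on ρf on the open interval
  have key : ∀ τ ∈ Set.Ioo (0:ℝ) b, 0 < ρf τ ∧ ρf τ < 1 := by
    intro τ hτ
    have hτI : τ ∈ Set.Icc (0:ℝ) b := ⟨hτ.1.le, hτ.2.le⟩
    have hmem := hmaps hτI
    have he := heq τ hτI
    constructor
    · rcases lt_or_eq_of_le hmem.1 with h | h
      · exact h
      · exfalso
        rw [← h] at he
        simp at he
        linarith [hτ.1, he]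
    · rcases lt_or_eq_of_le hmem.2 with h | h
      · exact h
      · exfalso
        rw [h] at he
        norm_num at he
        have hτb : τ = b := by rw [hb, ← he]; field_simp
        rw [hτb] at hτ
        exact lt_irrefl _ hτ.2
  -- ρf 0 = 0 and ρf b = 1
  have hρ0 : ρf 0 = 0 := by
    have h0I : (0:ℝ) ∈ Set.Icc (0:ℝ) b := ⟨le_rfl, hb0.le⟩
    have he := heq 0 h0I
    have hmem := hmaps h0I
    have : 3 * ρf 0 ^ 2 - 2 * ρf 0 ^ 3 = 0 := by
      field_simp at he
      linarith
    nlinarith [hmem.1, hmem.2, sq_nonneg (ρf 0)]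
  have hρb : ρf b = 1 := by
    have hbI : b ∈ Set.Icc (0:ℝ) b := ⟨hb0.le, le_rfl⟩
    have he := heq b hbI
    have hmem := hmaps hbI
    have h1 : 3 * ρf b ^ 2 - 2 * ρf b ^ 3 = 1 := by
      rw [hb] at he
      field_simp at he
      linarith
    -- 3ρ²−2ρ³−1 = −(1−ρ)²(1+2ρ)
    nlinarith [hmem.1, hmem.2, sq_nonneg (1 - ρf b), sq_nonneg (ρf b)]
  -- derivative of ρf on the open interval
  have hderiv : ∀ τ ∈ Set.Ioo (0:ℝ) b,
      HasDerivAt ρf ((ρf τ * (1 - ρf τ) / σ)⁻¹) τ := by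
    intro τ hτ
    obtain ⟨hρpos, hρlt⟩ := key τ hτ
    have hca : ContinuousAt ρf τ :=
      (hcont τ ⟨hτ.1.le, hτ.2.le⟩).continuousAt
        (Icc_mem_nhds hτ.1 hτ.2)
    have hg : HasDerivAt (fun ρ => (3 * ρ ^ 2 - 2 * ρ ^ 3) / (6 * σ))
        (ρf τ * (1 - ρf τ) / σ) (ρf τ) := by
      have : HasDerivAt (fun ρ => (3 * ρ ^ 2 - 2 * ρ ^ 3) / (6 * σ))
          ((3 * (2 * ρf τ) - 2 * (3 * ρf τ ^ 2)) / (6 * σ)) (ρf τ) := by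
        have h1 : HasDerivAt (fun ρ : ℝ => 3 * ρ ^ 2 - 2 * ρ ^ 3)
            (3 * (2 * ρf τ) - 2 * (3 * ρf τ ^ 2)) (ρf τ) := by
          have := ((hasDerivAt_pow 2 (ρf τ)).const_mul 3).sub
            ((hasDerivAt_pow 3 (ρf τ)).const_mul 2)
          simpa [Pi.sub_def] using this
        exact h1.div_const _
      convert this using 1
      field_simp
      ring
    have hne : ρf τ * (1 - ρf τ) / σ ≠ 0 := by
      have : 0 < ρf τ * (1 - ρf τ) / σ := by
        apply div_pos (mul_pos hρpos (by linarith)) hσ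
      linarith
    have hfg : ∀ᶠ y in nhds τ, (3 * (ρf y) ^ 2 - 2 * (ρf y) ^ 3) / (6 * σ) = y := by
      filter_upwards [Icc_mem_nhds hτ.1 hτ.2] with y hy
      exact heq y hy
    exact HasDerivAt.of_local_left_inverse hca hg hne hfg
  -- the antiderivative
  set F : ℝ → ℝ := fun τ => -(1 - ρf τ) ^ 3 / 3 with hF
  have hFcont : ContinuousOn F (Set.Icc 0 b) := by
    apply ContinuousOn.div_const
    exact (((continuousOn_const.sub hcont).pow 3)).neg
  have hFderiv : ∀ τ ∈ Set.Ioo (0:ℝ) b, HasDerivAt F (Q τ) τ := by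
    intro τ hτ
    obtain ⟨hρpos, hρlt⟩ := key τ hτ
    have h1 : HasDerivAt F
        (-(3 * (1 - ρf τ) ^ 2 * (0 - (ρf τ * (1 - ρf τ) / σ)⁻¹)) / 3) τ := by
      apply HasDerivAt.div_const
      apply HasDerivAt.neg
      have := ((hasDerivAt_const τ (1:ℝ)).sub (hderiv τ hτ)).pow 3
      simpa [Pi.sub_def, Pi.pow_def] using this
    convert h1 using 1
    rw [hQ τ hτ]
    have hne1 : ρf τ ≠ 0 := ne_of_gt hρpos
    have hne2 : (1:ℝ) - ρf τ ≠ 0 := by linarith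
    field_simp
    ring
  -- integrability of Q
  have hQint : MeasureTheory.IntegrableOn Q (Set.Ioo 0 b) := by
    have hbound : ∀ τ ∈ Set.Ioo (0:ℝ) b, ‖Q τ‖ ≤ Real.sqrt (σ / 2) * τ ^ (-(1:ℝ)/2) := by
      intro τ hτ
      obtain ⟨hρpos, hρlt⟩ := key τ hτ
      have he := heq τ ⟨hτ.1.le, hτ.2.le⟩
      -- ρf τ ≥ sqrt (2στ)
      have hρsq : 2 * σ * τ ≤ ρf τ ^ 2 := by
        have : 3 * ρf τ ^ 2 - 2 * ρf τ ^ 3 = 6 * σ * τ := by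
          field_simp at he
          linarith
        nlinarith [pow_pos hρpos 3]
      have hρge : Real.sqrt (2 * σ * τ) ≤ ρf τ := by
        rw [show ρf τ = Real.sqrt (ρf τ ^ 2) by rw [Real.sqrt_sq hρpos.le]]
        exact Real.sqrt_le_sqrt hρsq
      have hsqrtpos : 0 < Real.sqrt (2 * σ * τ) := by
        apply Real.sqrt_pos.mpr
        have := hτ.1
        positivity
      have hQval : Q τ = σ * (1 - ρf τ) / ρf τ := hQ τ hτ
      have hQnonneg : 0 ≤ Q τ := by
        rw [hQval]
        apply div_nonneg _ hρpos.le
        apply mul_nonneg hσ.le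
        linarith
      rw [Real.norm_eq_abs, abs_of_nonneg hQnonneg, hQval]
      have h12 : σ * (1 - ρf τ) / ρf τ ≤ σ / Real.sqrt (2 * σ * τ) := by
        apply div_le_div₀ hσ.le ?_ hsqrtpos hρge
        nlinarith
      refine h12.trans_eq ?_
      have hτpos := hτ.1
      have e1 : τ ^ (-(1:ℝ)/2) = (Real.sqrt τ)⁻¹ := by
        rw [Real.sqrt_eq_rpow, ← Real.rpow_neg hτpos.le]
        norm_num
      have e2 : Real.sqrt (2 * σ * τ) = Real.sqrt (2 * σ) * Real.sqrt τ := by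
        rw [Real.sqrt_mul (by positivity)]
      have e3 : Real.sqrt (σ / 2) * Real.sqrt (2 * σ) = σ := by
        rw [← Real.sqrt_mul (by positivity),
          show σ / 2 * (2 * σ) = σ ^ 2 by ring, Real.sqrt_sq hσ.le]
      have hs1 : Real.sqrt (2 * σ) ≠ 0 := by positivity
      have hs2 : Real.sqrt τ ≠ 0 := by positivity
      have h4 : (Real.sqrt τ)⁻¹ * Real.sqrt τ = 1 := inv_mul_cancel₀ hs2
      rw [e1, e2, div_eq_iff (by positivity : Real.sqrt (2 * σ) * Real.sqrt τ ≠ 0)]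
      linear_combination (-1 : ℝ) * e3 - (Real.sqrt (σ / 2) * Real.sqrt (2 * σ)) * h4
    -- measurability
    have hmeas : MeasureTheory.AEStronglyMeasurable Q
        (MeasureTheory.volume.restrict (Set.Ioo 0 b)) := by
      have hcQ : ContinuousOn (fun τ => σ * (1 - ρf τ) / ρf τ) (Set.Ioo 0 b) := by
        apply ContinuousOn.div
        · exact continuousOn_const.mul (continuousOn_const.sub
            (hcont.mono Set.Ioo_subset_Icc_self))
        · exact hcont.mono Set.Ioo_subset_Icc_self
        · intro τ hτ
          exact ne_of_gt (key τ hτ).1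
      refine (hcQ.aestronglyMeasurable measurableSet_Ioo).congr ?_
      exact MeasureTheory.ae_restrict_of_forall_mem measurableSet_Ioo
        fun τ hτ => (hQ τ hτ).symm
    -- integrable bound
    have hgint : MeasureTheory.IntegrableOn
        (fun τ => Real.sqrt (σ / 2) * τ ^ (-(1:ℝ)/2)) (Set.Ioo 0 b) := by
      have h1 : IntervalIntegrable (fun τ : ℝ => τ ^ (-(1:ℝ)/2))
          MeasureTheory.volume 0 b := by
        exact intervalIntegral.intervalIntegrable_rpow' (by norm_num)
      have h2 := (h1.const_mul (Real.sqrt (σ / 2)))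
      rw [intervalIntegrable_iff_integrableOn_Ioo_of_le hb0.le] at h2
      exact h2
    apply MeasureTheory.Integrable.mono' hgint hmeas
    exact MeasureTheory.ae_restrict_of_forall_mem measurableSet_Ioo hbound
  refine ⟨hQint, ?_, ?_⟩
  · -- the value of the integral via FTC
    have hII : IntervalIntegrable Q MeasureTheory.volume 0 b :=
      (intervalIntegrable_iff_integrableOn_Ioo_of_le hb0.le).mpr hQint
    have := intervalIntegral.integral_eq_sub_of_hasDeriv_right_of_le hb0.le hFcont
      (fun x hx => (hFderiv x hx).hasDerivWithinAt) hII
    rw [intervalIntegral.integral_of_le hb0.le, MeasureTheory.integral_Ioc_eq_integral_Ioo] at this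
    rw [this, hF]
    simp [hρ0, hρb]
    norm_num
  · rw [intervalIntegral.integral_comp_sub_left (fun x : ℝ => x ^ 2) 1]
    norm_num [integral_pow]
end

section
/- Let K⁺ ≥ 0, K⁻ ≥ 0, let u : [τ₀, τ₁] → ℝ be continuous with 0 ≤ u(τ) ≤ 1 for all τ, and let θ : [τ₀, τ₁] → ℝ be differentiable and satisfy the adsorption kinetics ODE θ'(τ) = K⁺ u(τ)(1 − θ(τ)) − K⁻ θ(τ) with initial value θ(τ₀) ∈ [0,1]. Then 0 ≤ θ(τ) ≤ 1 for all τ ∈ [τ₀, τ₁]. -/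
open Set

lemma sq_max_hasDerivAt (x : ℝ) : HasDerivAt (fun y : ℝ => max y 0 ^ 2) (2 * max x 0) x := by
  rcases lt_trichotomy x 0 with h | h | h
  · have : (fun y : ℝ => max y 0 ^ 2) =ᶠ[nhds x] (fun _ => (0:ℝ)) := by
      filter_upwards [eventually_lt_nhds h] with y hy
      simp [max_eq_right hy.le]
    rw [max_eq_right h.le, mul_zero]
    exact (hasDerivAt_const x (0:ℝ)).congr_of_eventuallyEq this
  · have keyd : HasDerivAt (fun y : ℝ => max y 0 ^ 2) 0 0 := by
      rw [hasDerivAt_iff_tendsto_slope]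
      have hs : slope (fun y : ℝ => max y 0 ^ 2) 0 =ᶠ[nhdsWithin 0 {(0:ℝ)}ᶜ] fun y => max y 0 := by
        filter_upwards [self_mem_nhdsWithin] with y hy
        have hy' : y ≠ 0 := hy
        have key : max y 0 ^ 2 = y * max y 0 := by
          rcases le_total y 0 with h | h
          · simp [max_eq_right h]
          · simp [max_eq_left h]; ring
        rw [slope_def_field, key]
        field_simp
        simp only [max_self, sub_zero]; ring
      have ht : Filter.Tendsto (fun y : ℝ => max y 0) (nhdsWithin 0 {(0:ℝ)}ᶜ) (nhds (max 0 0)) :=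
        ((continuous_id.max continuous_const).tendsto 0).mono_left nhdsWithin_le_nhds
      simp only [max_self] at ht
      exact ht.congr' hs.symm
    subst h
    simpa using keyd
  · have : (fun y : ℝ => max y 0 ^ 2) =ᶠ[nhds x] (fun y => y ^ 2) := by
      filter_upwards [eventually_gt_nhds h] with y hy
      simp [max_eq_left hy.le]
    rw [max_eq_left h.le]
    have h2 : HasDerivAt (fun y : ℝ => y ^ 2) (2 * x) x := by
      simpa using (hasDerivAt_pow 2 x)
    exact h2.congr_of_eventuallyEq this

/-- If K⁺, K⁻ ≥ 0, u : [τ₀, τ₁] → ℝ is continuous with 0 ≤ u ≤ 1, and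
θ is differentiable on [τ₀, τ₁] with θ' = K⁺ u (1 − θ) − K⁻ θ and θ(τ₀) ∈ [0,1],
then 0 ≤ θ(τ) ≤ 1 for all τ ∈ [τ₀, τ₁]. -/
theorem adsorption_invariant (Kp Km : ℝ) (hKp : 0 ≤ Kp) (hKm : 0 ≤ Km)
    (τ₀ τ₁ : ℝ) (hτ : τ₀ ≤ τ₁) (u θ : ℝ → ℝ)
    (hu_cont : ContinuousOn u (Set.Icc τ₀ τ₁))
    (hu_bounds : ∀ τ ∈ Set.Icc τ₀ τ₁, u τ ∈ Set.Icc (0 : ℝ) 1)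
    (hθ : ∀ τ ∈ Set.Icc τ₀ τ₁,
      HasDerivWithinAt θ (Kp * u τ * (1 - θ τ) - Km * θ τ) (Set.Icc τ₀ τ₁) τ)
    (hθ0 : θ τ₀ ∈ Set.Icc (0 : ℝ) 1) :
    ∀ τ ∈ Set.Icc τ₀ τ₁, θ τ ∈ Set.Icc (0 : ℝ) 1 := by
  set g : ℝ → ℝ := fun τ => max (θ τ - 1) 0 ^ 2 + max (-θ τ) 0 ^ 2 with hg
  -- continuity of θ and g on Icc
  have hθc : ContinuousOn θ (Icc τ₀ τ₁) := fun τ hτm => (hθ τ hτm).continuousWithinAt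
  have houter : Continuous fun y : ℝ => max (y - 1) 0 ^ 2 + max (-y) 0 ^ 2 := by
    apply Continuous.add
    · exact (((continuous_id.sub continuous_const).max continuous_const).pow 2)
    · exact ((continuous_id.neg.max continuous_const).pow 2)
  have hgc : ContinuousOn g (Icc τ₀ τ₁) := houter.comp_continuousOn hθc
  -- g has nonpositive derivative at interior points
  have hint : interior (Icc τ₀ τ₁) = Ioo τ₀ τ₁ := interior_Icc
  have hgd : ∀ τ ∈ Ioo τ₀ τ₁, HasDerivAt g
      (2 * max (θ τ - 1) 0 * (Kp * u τ * (1 - θ τ) - Km * θ τ)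
        + 2 * max (-θ τ) 0 * (-(Kp * u τ * (1 - θ τ) - Km * θ τ))) τ := by
    intro τ hτm
    have hmem : τ ∈ Icc τ₀ τ₁ := Ioo_subset_Icc_self hτm
    have hθd : HasDerivAt θ (Kp * u τ * (1 - θ τ) - Km * θ τ) τ :=
      (hθ τ hmem).hasDerivAt (Icc_mem_nhds hτm.1 hτm.2)
    have h1 : HasDerivAt (fun s => max (θ s - 1) 0 ^ 2)
        (2 * max (θ τ - 1) 0 * (Kp * u τ * (1 - θ τ) - Km * θ τ)) τ := by
      have := (sq_max_hasDerivAt (θ τ - 1)).comp τ (hθd.sub_const 1)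
      simpa [mul_comm, Function.comp_def] using this
    have h2 : HasDerivAt (fun s => max (-θ s) 0 ^ 2)
        (2 * max (-θ τ) 0 * (-(Kp * u τ * (1 - θ τ) - Km * θ τ))) τ := by
      have := (sq_max_hasDerivAt (-θ τ)).comp τ hθd.neg
      simpa [mul_comm, Function.comp_def] using this
    exact h1.add h2
  have hderiv_nonpos : ∀ τ ∈ interior (Icc τ₀ τ₁), deriv g τ ≤ 0 := by
    intro τ hτm
    rw [hint] at hτm
    rw [(hgd τ hτm).deriv]
    have hmem : τ ∈ Icc τ₀ τ₁ := Ioo_subset_Icc_self hτm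
    obtain ⟨hu0, hu1⟩ := hu_bounds τ hmem
    have hterm1 : 2 * max (θ τ - 1) 0 * (Kp * u τ * (1 - θ τ) - Km * θ τ) ≤ 0 := by
      rcases le_total (θ τ) 1 with h | h
      · simp [max_eq_right (by linarith : θ τ - 1 ≤ 0)]
      · have hmax : max (θ τ - 1) 0 = θ τ - 1 := max_eq_left (by linarith)
        rw [hmax]
        have h1 : Kp * u τ * (1 - θ τ) ≤ 0 := by
          apply mul_nonpos_of_nonneg_of_nonpos (by positivity) (by linarith)
        have h2 : 0 ≤ Km * θ τ := mul_nonneg hKm (by linarith)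
        exact mul_nonpos_of_nonneg_of_nonpos (by linarith) (by linarith)
    have hterm2 : 2 * max (-θ τ) 0 * (-(Kp * u τ * (1 - θ τ) - Km * θ τ)) ≤ 0 := by
      rcases le_total 0 (θ τ) with h | h
      · simp [max_eq_right (by linarith : -θ τ ≤ 0)]
      · have hmax : max (-θ τ) 0 = -θ τ := max_eq_left (by linarith)
        rw [hmax]
        have h1 : 0 ≤ Kp * u τ * (1 - θ τ) := by
          apply mul_nonneg (by positivity) (by linarith)
        have h2 : Km * θ τ ≤ 0 := mul_nonpos_of_nonneg_of_nonpos hKm h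
        exact mul_nonpos_of_nonneg_of_nonpos (by linarith) (by linarith)
    linarith
  have hgdiff : DifferentiableOn ℝ g (interior (Icc τ₀ τ₁)) := by
    rw [hint]; intro τ hτm
    exact ((hgd τ hτm).differentiableAt).differentiableWithinAt
  have hanti : AntitoneOn g (Icc τ₀ τ₁) :=
    antitoneOn_of_deriv_nonpos (convex_Icc τ₀ τ₁) hgc hgdiff hderiv_nonpos
  intro τ hτm
  have h0 : g τ₀ = 0 := by
    obtain ⟨h1, h2⟩ := hθ0
    simp [hg, max_eq_right (by linarith : θ τ₀ - 1 ≤ 0),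
      max_eq_right (by linarith : -θ τ₀ ≤ 0)]
  have hle : g τ ≤ 0 := by
    have := hanti (left_mem_Icc.mpr hτ) hτm hτm.1
    linarith
  have hsq1 : max (θ τ - 1) 0 ^ 2 = 0 := by
    have a := sq_nonneg (max (θ τ - 1) 0); have b := sq_nonneg (max (-θ τ) 0)
    simp only [hg] at hle; linarith
  have hsq2 : max (-θ τ) 0 ^ 2 = 0 := by
    have a := sq_nonneg (max (θ τ - 1) 0); have b := sq_nonneg (max (-θ τ) 0)
    simp only [hg] at hle; linarith
  have e1 : max (θ τ - 1) 0 = 0 := by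
    have := pow_eq_zero_iff (n := 2) (by norm_num) |>.mp hsq1; exact this
  have e2 : max (-θ τ) 0 = 0 := by
    have := pow_eq_zero_iff (n := 2) (by norm_num) |>.mp hsq2; exact this
  constructor
  · have := le_max_left (-θ τ) 0; rw [e2] at this; linarith
  · have := le_max_left (θ τ - 1) 0; rw [e1] at this; linarith
end

section
/- Let σ > 0, τ_e = 1/(6σ), let ρ_f : [0, τ_e] → [0,1] be the continuous strictly increasing function satisfying (3ρ_f(τ)² − 2ρ_f(τ)³)/(6σ) = τ, and let Q(τ) = (1 − ρ_f(τ))² ρ_f'(τ) for τ ∈ (0, τ_e). Let η ≥ 0, d > 0, u⁰ ∈ ℝ, and let u, θ : ℝ × ℝ → ℝ be C² functions such that for all τ ∈ (0, τ_e) and all ρ ∈ (0, ρ_f(τ)): (i) (1 − ρ)² ∂/∂τ (u(ρ,τ) + η θ(ρ,τ)) = −Q(τ) ∂u/∂ρ(ρ,τ) + d ∂/∂ρ[(1 − ρ)² ∂u/∂ρ(ρ,τ)]; (ii) the boundary condition d ∂u/∂ρ(0,τ) = Q(τ)(u(0,τ) − u⁰) holds at ρ = 0; (iii) the Neumann condition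 ∂u/∂ρ(ρ_f(τ),τ) = 0 holds at the liquid front; and (iv) θ(ρ_f(τ),τ) = 0 at the liquid front. Define M₂(τ) = ∫₀^{ρ_f(τ)} [u(ξ,τ) + η θ(ξ,τ)] (1 − ξ)² dξ. Then for every τ ∈ (0, τ_e), M₂ is differentiable at τ and dM₂/dτ (τ) = u⁰ Q(τ). -/
open Set MeasureTheory intervalIntegral

lemma hasDerivAt_slice2 {f : ℝ × ℝ → ℝ} (hf : Differentiable ℝ f) (x t : ℝ) :
    HasDerivAt (fun t' => f (x, t')) (fderiv ℝ f (x, t) (0, 1)) t := by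
  have h := ((hf (x, t)).hasFDerivAt).comp_hasDerivAt t
    ((hasDerivAt_const t x).prodMk (hasDerivAt_id t))
  exact h

lemma hasDerivAt_slice1 {f : ℝ × ℝ → ℝ} (hf : Differentiable ℝ f) (x t : ℝ) :
    HasDerivAt (fun r => f (r, t)) (fderiv ℝ f (x, t) (1, 0)) x := by
  have h := ((hf (x, t)).hasFDerivAt).comp_hasDerivAt x
    ((hasDerivAt_id x).prodMk (hasDerivAt_const x t))
  exact h

lemma contDiff_fderiv_apply {f : ℝ × ℝ → ℝ} (hf : ContDiff ℝ 2 f) (v : ℝ × ℝ) :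
    ContDiff ℝ 1 (fun p => fderiv ℝ f p v) :=
  (hf.fderiv_right (by norm_num)).clm_apply contDiff_const

/-- mass-balance lemma, differential form: under the impregnation
PDE (i) with Danckwerts boundary condition (ii) at ρ = 0, Neumann condition (iii)
and θ = 0 (iv) at the moving front ρ_f(τ), the total solute content
M₂(τ) = ∫₀^{ρ_f(τ)} [u + ηθ](1 − ξ)² dξ is differentiable on (0, τ_e) with
M₂'(τ) = u⁰ Q(τ), where Q(τ) = (1 − ρ_f(τ))² ρ_f'(τ). -/
theorem mass_balance_derivative (σ : ℝ) (hσ : 0 < σ) (ρf : ℝ → ℝ)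
    (hcont : ContinuousOn ρf (Set.Icc 0 (1 / (6 * σ))))
    (hmono : StrictMonoOn ρf (Set.Icc 0 (1 / (6 * σ))))
    (hmaps : Set.MapsTo ρf (Set.Icc 0 (1 / (6 * σ))) (Set.Icc 0 1))
    (heq : ∀ τ ∈ Set.Icc (0 : ℝ) (1 / (6 * σ)),
      (3 * (ρf τ) ^ 2 - 2 * (ρf τ) ^ 3) / (6 * σ) = τ)
    (Q : ℝ → ℝ)
    (hQ : ∀ τ ∈ Set.Ioo (0 : ℝ) (1 / (6 * σ)),
      Q τ = (1 - ρf τ) ^ 2 * deriv ρf τ)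
    (η d u0 : ℝ) (hη : 0 ≤ η) (hd : 0 < d)
    (u θ : ℝ × ℝ → ℝ) (hu : ContDiff ℝ 2 u) (hθ : ContDiff ℝ 2 θ)
    -- (i) the convection-reaction-diffusion equation in the wet region
    (hpde : ∀ τ ∈ Set.Ioo (0 : ℝ) (1 / (6 * σ)), ∀ ρ ∈ Set.Ioo (0 : ℝ) (ρf τ),
      (1 - ρ) ^ 2 * deriv (fun t => u (ρ, t) + η * θ (ρ, t)) τ =
        -Q τ * deriv (fun r => u (r, τ)) ρ +
          d * deriv (fun r => (1 - r) ^ 2 * deriv (fun r' => u (r', τ)) r) ρ)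
    -- (ii) Danckwerts boundary condition at ρ = 0
    (hbc0 : ∀ τ ∈ Set.Ioo (0 : ℝ) (1 / (6 * σ)),
      d * deriv (fun r => u (r, τ)) 0 = Q τ * (u (0, τ) - u0))
    -- (iii) Neumann condition at the liquid front
    (hbcf : ∀ τ ∈ Set.Ioo (0 : ℝ) (1 / (6 * σ)),
      deriv (fun r => u (r, τ)) (ρf τ) = 0)
    -- (iv) no adsorbed species at the liquid front
    (hθf : ∀ τ ∈ Set.Ioo (0 : ℝ) (1 / (6 * σ)), θ (ρf τ, τ) = 0)
    (M₂ : ℝ → ℝ)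
    (hM₂ : ∀ τ, M₂ τ = ∫ ξ in (0 : ℝ)..(ρf τ),
      (u (ξ, τ) + η * θ (ξ, τ)) * (1 - ξ) ^ 2) :
    ∀ τ ∈ Set.Ioo (0 : ℝ) (1 / (6 * σ)), HasDerivAt M₂ (u0 * Q τ) τ := by
  intro τ₀ hτ
  obtain ⟨hτ0, hτe⟩ := hτ
  have hτIcc : τ₀ ∈ Set.Icc (0:ℝ) (1/(6*σ)) := ⟨hτ0.le, hτe.le⟩
  have hc01 := hmaps hτIcc
  set c := ρf τ₀ with hc
  have hgc : (3*c^2 - 2*c^3)/(6*σ) = τ₀ := heq τ₀ hτIcc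
  have hσ6 : (0:ℝ) < 6*σ := by positivity
  have hc0 : 0 < c := by
    rcases eq_or_lt_of_le hc01.1 with h | h
    · exfalso; rw [← h] at hgc; simp at hgc; linarith
    · exact h
  have hc1 : c < 1 := by
    rcases eq_or_lt_of_le hc01.2 with h | h
    · exfalso; rw [h] at hgc; norm_num at hgc
      have h6 : (1:ℝ)/(6*σ) = σ⁻¹ * (1/6) := by field_simp
      linarith
    · exact h
  -- derivative of the front position
  have hρf' : HasDerivAt ρf ((c - c^2)/σ)⁻¹ τ₀ := by
    have hg : HasDerivAt (fun r => (3*r^2 - 2*r^3)/(6*σ)) ((c - c^2)/σ) c := by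
      have h1 : HasDerivAt (fun r : ℝ => 3*r^2 - 2*r^3) (3*(2*c) - 2*(3*c^2)) c := by
        have := ((hasDerivAt_pow 2 c).const_mul 3).sub ((hasDerivAt_pow 3 c).const_mul 2)
        exact this.congr_deriv (by norm_num)
      have := h1.div_const (6*σ)
      exact this.congr_deriv (by field_simp; ring)
    have hne : (c - c^2)/σ ≠ 0 := by
      have : 0 < c - c^2 := by nlinarith
      positivity
    have hρfc : ContinuousAt ρf τ₀ := hcont.continuousAt (Icc_mem_nhds hτ0 hτe)
    have hfg : ∀ᶠ y in nhds τ₀, (fun r => (3*r^2 - 2*r^3)/(6*σ)) (ρf y) = y := by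
      filter_upwards [Ioo_mem_nhds hτ0 hτe] with y hy
      exact heq y (Ioo_subset_Icc_self hy)
    exact HasDerivAt.of_local_left_inverse hρfc hg hne hfg
  set ρ' : ℝ := ((c - c^2)/σ)⁻¹ with hρ'
  have hderiv_ρf : deriv ρf τ₀ = ρ' := hρf'.deriv
  -- abbreviations
  set w : ℝ × ℝ → ℝ := fun p => u p + η * θ p with hw_def
  have hw : ContDiff ℝ 2 w := hu.add (contDiff_const.mul hθ)
  set Fp : ℝ × ℝ → ℝ := fun p => w p * (1 - p.1)^2 with hFp_def
  have hFpc : ContDiff ℝ 2 Fp :=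
    hw.mul (((contDiff_const.sub contDiff_fst).pow 2 : ContDiff ℝ 2 fun p : ℝ × ℝ => (1 - p.1)^2))
  set wτ : ℝ × ℝ → ℝ := fun p => fderiv ℝ w p (0,1) with hwτ_def
  set uρ : ℝ × ℝ → ℝ := fun p => fderiv ℝ u p (1,0) with huρ_def
  set Fτ : ℝ × ℝ → ℝ := fun p => wτ p * (1 - p.1)^2 with hFτ_def
  have hwdiff : Differentiable ℝ w := hw.differentiable (by norm_num)
  have hudiff : Differentiable ℝ u := hu.differentiable (by norm_num)
  have hw_slice2 : ∀ x t : ℝ, HasDerivAt (fun t' => w (x, t')) (wτ (x, t)) t :=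
    fun x t => hasDerivAt_slice2 hwdiff x t
  have hu_slice1 : ∀ x t : ℝ, HasDerivAt (fun r => u (r, t)) (uρ (x, t)) x :=
    fun x t => hasDerivAt_slice1 hudiff x t
  have hwτc : Continuous wτ := ((contDiff_fderiv_apply hw (0,1)).continuous : Continuous wτ)
  have huρc : Continuous uρ := ((contDiff_fderiv_apply hu (1,0)).continuous : Continuous uρ)
  have hFτc : Continuous Fτ :=
    hwτc.mul ((continuous_const.sub continuous_fst).pow 2)
  have hFpcont : Continuous Fp := hFpc.continuous
  have hFp_slice_cont : ∀ t : ℝ, Continuous fun x => Fp (x, t) := fun t =>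
    hFpcont.comp (continuous_id.prodMk continuous_const)
  -- Step C : parameter part
  obtain ⟨C₃, hC₃⟩ := (isCompact_Icc : IsCompact (Set.Icc ((0:ℝ), τ₀-1) ((c:ℝ), τ₀+1))).exists_bound_of_continuousOn hFτc.continuousOn
  have hH : HasDerivAt (fun t => ∫ x in (0:ℝ)..c, Fp (x, t))
      (∫ x in (0:ℝ)..c, Fτ (x, τ₀)) τ₀ := by
    have key := intervalIntegral.hasDerivAt_integral_of_dominated_loc_of_deriv_le
      (μ := volume) (F := fun t x => Fp (x, t)) (F' := fun t x => Fτ (x, t))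
      (a := 0) (b := c) (x₀ := τ₀) (bound := fun _ => C₃) (s := Metric.ball τ₀ 1) (Metric.ball_mem_nhds τ₀ one_pos)
      (Filter.Eventually.of_forall fun t => ((hFp_slice_cont t).aestronglyMeasurable))
      ((hFp_slice_cont τ₀).intervalIntegrable 0 c)
      ((hFτc.comp (continuous_id.prodMk continuous_const)).aestronglyMeasurable)
      ?_ (intervalIntegrable_const) ?_
    · exact key.2
    · refine Filter.Eventually.of_forall fun x hx t ht => ?_
      apply hC₃
      rw [Set.uIoc_of_le hc0.le] at hx
      rw [Metric.mem_ball, Real.dist_eq, abs_sub_lt_iff] at ht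
      simp only [Set.mem_Icc, Prod.mk_le_mk]
      exact ⟨⟨hx.1.le, by linarith⟩, ⟨hx.2, by linarith⟩⟩
    · refine Filter.Eventually.of_forall fun x _ t _ => ?_
      exact (hw_slice2 x t).mul_const ((1 - x)^2)
  -- Step D : value of the parameter part
  have hQτ : Q τ₀ = (1 - c)^2 * ρ' := by rw [hQ τ₀ ⟨hτ0, hτe⟩, hderiv_ρf]
  have hval : (∫ x in (0:ℝ)..c, Fτ (x, τ₀)) = Q τ₀ * u0 - Q τ₀ * u (c, τ₀) := by
    set G : ℝ → ℝ := fun y => -Q τ₀ * u (y, τ₀) + d * ((1 - y)^2 * uρ (y, τ₀)) with hG_def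
    have hGc : ContinuousOn G (Set.Icc 0 c) := by
      apply Continuous.continuousOn
      apply Continuous.add
      · exact continuous_const.mul (hudiff.continuous.comp (continuous_id.prodMk continuous_const))
      · exact continuous_const.mul (((continuous_const.sub continuous_id).pow 2).mul
          (huρc.comp (continuous_id.prodMk continuous_const)))
    have hGderiv : ∀ x ∈ Set.Ioo (0:ℝ) c, HasDerivAt G (Fτ (x, τ₀)) x := by
      intro x hx
      have h1 : HasDerivAt (fun y => u (y, τ₀)) (uρ (x, τ₀)) x := hu_slice1 x τ₀
      have huρd : DifferentiableAt ℝ (fun y => (1 - y)^2 * uρ (y, τ₀)) x := by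
        apply DifferentiableAt.mul
        · exact (((differentiable_const (1:ℝ)).sub differentiable_id).pow 2).differentiableAt
        · exact (((contDiff_fderiv_apply hu (1,0)).differentiable one_ne_zero).comp
            (differentiable_id.prodMk (differentiable_const τ₀))).differentiableAt
      have hfeq : (fun r => (1 - r)^2 * deriv (fun r' => u (r', τ₀)) r)
          = fun y => (1 - y)^2 * uρ (y, τ₀) := by
        funext r; rw [(hu_slice1 r τ₀).deriv]
      have h2 : HasDerivAt (fun y => (1 - y)^2 * uρ (y, τ₀))
          (deriv (fun r => (1 - r)^2 * deriv (fun r' => u (r', τ₀)) r) x) x := by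
        rw [hfeq]; exact huρd.hasDerivAt
      have h3 := (h1.const_mul (-Q τ₀)).add (h2.const_mul d)
      have hpde' := hpde τ₀ ⟨hτ0, hτe⟩ x (by simpa [← hc] using hx)
      have hL : deriv (fun t => u (x, t) + η * θ (x, t)) τ₀ = wτ (x, τ₀) :=
        (hw_slice2 x τ₀).deriv
      have hR : deriv (fun r => u (r, τ₀)) x = uρ (x, τ₀) := (hu_slice1 x τ₀).deriv
      rw [hL, hR] at hpde'
      have : Fτ (x, τ₀) = -Q τ₀ * uρ (x, τ₀)
          + d * deriv (fun r => (1 - r)^2 * deriv (fun r' => u (r', τ₀)) r) x := by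
        rw [← hpde']; show wτ (x, τ₀) * (1 - x)^2 = _; ring
      rw [this]
      exact h3
    have hint : IntervalIntegrable (fun x => Fτ (x, τ₀)) volume 0 c :=
      (hFτc.comp (continuous_id.prodMk continuous_const)).intervalIntegrable 0 c
    have := intervalIntegral.integral_eq_sub_of_hasDerivAt_of_le hc0.le hGc hGderiv hint
    rw [this]
    have hbcf' : uρ (c, τ₀) = 0 := by
      have := hbcf τ₀ ⟨hτ0, hτe⟩
      rw [(hu_slice1 (ρf τ₀) τ₀).deriv] at this
      exact this
    have hbc0' : d * uρ (0, τ₀) = Q τ₀ * (u (0, τ₀) - u0) := by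
      have := hbc0 τ₀ ⟨hτ0, hτe⟩
      rw [(hu_slice1 0 τ₀).deriv] at this
      exact this
    show (-Q τ₀ * u (c, τ₀) + d * ((1 - c)^2 * uρ (c, τ₀)))
        - (-Q τ₀ * u (0, τ₀) + d * ((1 - 0)^2 * uρ (0, τ₀))) = _
    rw [hbcf']
    have : d * ((1 - (0:ℝ))^2 * uρ (0, τ₀)) = Q τ₀ * (u (0, τ₀) - u0) := by
      rw [← hbc0']; ring
    rw [this]; ring
  -- Step B : moving-boundary part (frozen integrand)
  have hG₁ : HasDerivAt (fun t => ∫ x in c..ρf t, Fp (x, τ₀)) (Fp (c, τ₀) * ρ') τ₀ := by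
    have h1 : HasDerivAt (fun b => ∫ x in c..b, Fp (x, τ₀)) (Fp (c, τ₀)) c :=
      intervalIntegral.integral_hasDerivAt_right
        ((hFp_slice_cont τ₀).intervalIntegrable c c)
        ((hFp_slice_cont τ₀).aestronglyMeasurable.stronglyMeasurableAtFilter)
        (hFp_slice_cont τ₀).continuousAt
    exact h1.comp τ₀ hρf'
  -- Step A : error part is o(τ - τ₀)
  have hE : HasDerivAt (fun t => ∫ x in c..ρf t, (Fp (x, t) - Fp (x, τ₀))) 0 τ₀ := by
    obtain ⟨C₂, hC₂⟩ := (isCompact_Icc :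
        IsCompact (Set.Icc ((c-1:ℝ), τ₀-1) ((c+1:ℝ), τ₀+1))).exists_bound_of_continuousOn
      ((hFpc.continuous_fderiv (by norm_num)).continuousOn)
    have hC₂0 : 0 ≤ C₂ := le_trans (norm_nonneg _) (hC₂ (c, τ₀) (by
      simp only [Set.mem_Icc, Prod.mk_le_mk]; constructor <;> constructor <;> linarith))
    obtain ⟨C₄, hC₄pos, hbig4⟩ := (hρf'.isBigO_sub).exists_pos
    have hbnd4 := hbig4.bound
    rw [hasDerivAt_iff_isLittleO]
    have h0 : (∫ x in c..ρf τ₀, (Fp (x, τ₀) - Fp (x, τ₀))) = 0 := by simp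
    simp only [← hc, h0, intervalIntegral.integral_same, smul_zero, sub_zero]
    have hsq : (fun t : ℝ => (t - τ₀) * (t - τ₀)) =o[nhds τ₀] fun t => t - τ₀ := by
      have h1 : (fun t : ℝ => t - τ₀) =o[nhds τ₀] (fun _ => (1:ℝ)) := by
        rw [Asymptotics.isLittleO_one_iff]
        have : Filter.Tendsto (fun t : ℝ => t - τ₀) (nhds τ₀) (nhds (τ₀ - τ₀)) :=
          (continuous_id.sub continuous_const).tendsto τ₀
        simpa using this
      simpa using (Asymptotics.isBigO_refl (fun t : ℝ => t - τ₀) (nhds τ₀)).mul_isLittleO h1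
    refine Asymptotics.IsBigO.trans_isLittleO ?_ hsq
    rw [Asymptotics.isBigO_iff]
    refine ⟨C₂ * C₄, ?_⟩
    have hev1 : ∀ᶠ t in nhds τ₀, |t - τ₀| < min 1 C₄⁻¹ :=
      eventually_abs_sub_lt τ₀ (lt_min one_pos (by positivity))
    filter_upwards [hbnd4, hev1] with t hbt hlt
    have hlt1 : |t - τ₀| < 1 := lt_of_lt_of_le hlt (min_le_left _ _)
    have hltC : |t - τ₀| < C₄⁻¹ := lt_of_lt_of_le hlt (min_le_right _ _)
    have hρlt : |ρf t - c| ≤ C₄ * |t - τ₀| := by simpa [Real.norm_eq_abs] using hbt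
    have hρ1 : |ρf t - c| ≤ 1 := by
      calc |ρf t - c| ≤ C₄ * |t - τ₀| := hρlt
        _ ≤ C₄ * C₄⁻¹ := by nlinarith [abs_nonneg (t - τ₀)]
        _ = 1 := mul_inv_cancel₀ hC₄pos.ne'
    have hboundx : ∀ x ∈ Set.uIoc c (ρf t), ‖Fp (x, t) - Fp (x, τ₀)‖ ≤ C₂ * |t - τ₀| := by
      intro x hx
      have hx' : c - 1 ≤ x ∧ x ≤ c + 1 := by
        have h1 := hx.1
        have h2 := hx.2
        rcases abs_le.1 hρ1 with ⟨ha, hb⟩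
        constructor
        · have : min c (ρf t) ≤ x := le_of_lt h1
          have : c - 1 ≤ min c (ρf t) := le_min (by linarith) (by linarith)
          linarith [le_of_lt h1]
        · have : x ≤ max c (ρf t) := h2
          have hm : max c (ρf t) ≤ c + 1 := max_le (by linarith) (by linarith)
          linarith
      rcases abs_sub_lt_iff.1 hlt1 with ⟨hta, htb⟩
      have hmem1 : ((x, t) : ℝ × ℝ) ∈ Set.Icc ((c-1:ℝ), τ₀-1) ((c+1:ℝ), τ₀+1) := by
        simp only [Set.mem_Icc, Prod.mk_le_mk]
        exact ⟨⟨hx'.1, by linarith⟩, ⟨hx'.2, by linarith⟩⟩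
      have hmem2 : ((x, τ₀) : ℝ × ℝ) ∈ Set.Icc ((c-1:ℝ), τ₀-1) ((c+1:ℝ), τ₀+1) := by
        simp only [Set.mem_Icc, Prod.mk_le_mk]
        exact ⟨⟨hx'.1, by linarith⟩, ⟨hx'.2, by linarith⟩⟩
      have := (convex_Icc _ _).norm_image_sub_le_of_norm_fderiv_le
        (fun p _ => (hFpc.differentiable (by norm_num)).differentiableAt)
        hC₂ hmem2 hmem1
      calc ‖Fp (x, t) - Fp (x, τ₀)‖ ≤ C₂ * ‖((x, t) : ℝ × ℝ) - (x, τ₀)‖ := this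
        _ = C₂ * |t - τ₀| := by
            congr 1
            have : ((x, t) : ℝ × ℝ) - (x, τ₀) = (0, t - τ₀) := by simp
            rw [this, Prod.norm_def]
            simp [Real.norm_eq_abs]
    calc ‖∫ x in c..ρf t, (Fp (x, t) - Fp (x, τ₀))‖
        ≤ C₂ * |t - τ₀| * |ρf t - c| :=
          intervalIntegral.norm_integral_le_of_norm_le_const hboundx
      _ ≤ C₂ * |t - τ₀| * (C₄ * |t - τ₀|) := by
          apply mul_le_mul_of_nonneg_left hρlt (by positivity)
      _ ≤ C₂ * C₄ * ‖(t - τ₀) * (t - τ₀)‖ := by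
          rw [Real.norm_eq_abs, abs_mul]; nlinarith [abs_nonneg (t - τ₀)]
  -- assemble
  have hsplit : M₂ = fun t => (∫ x in (0:ℝ)..c, Fp (x, t))
      + ((∫ x in c..ρf t, Fp (x, τ₀)) + (∫ x in c..ρf t, (Fp (x, t) - Fp (x, τ₀)))) := by
    funext t
    rw [hM₂ t]
    have hint1 : IntervalIntegrable (fun x => Fp (x, t)) volume 0 c :=
      (hFp_slice_cont t).intervalIntegrable 0 c
    have hint2 : IntervalIntegrable (fun x => Fp (x, t)) volume c (ρf t) :=
      (hFp_slice_cont t).intervalIntegrable c (ρf t)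
    have hint3 : IntervalIntegrable (fun x => Fp (x, τ₀)) volume c (ρf t) :=
      (hFp_slice_cont τ₀).intervalIntegrable c (ρf t)
    have h1 : (∫ x in (0:ℝ)..ρf t, Fp (x, t))
        = (∫ x in (0:ℝ)..c, Fp (x, t)) + ∫ x in c..ρf t, Fp (x, t) :=
      (intervalIntegral.integral_add_adjacent_intervals hint1 hint2).symm
    have h2 : (∫ x in c..ρf t, Fp (x, t))
        = (∫ x in c..ρf t, Fp (x, τ₀)) + ∫ x in c..ρf t, (Fp (x, t) - Fp (x, τ₀)) := by
      rw [← intervalIntegral.integral_add hint3 (hint2.sub hint3)]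
      congr 1; funext x; ring
    have hinteq : (∫ ξ in (0:ℝ)..ρf t, (u (ξ, t) + η * θ (ξ, t)) * (1 - ξ)^2)
        = ∫ x in (0:ℝ)..ρf t, Fp (x, t) := rfl
    rw [hinteq, h1, h2]
  rw [hsplit]
  have htotal := hH.add (hG₁.add hE)
  have hvaltot : (∫ x in (0:ℝ)..c, Fτ (x, τ₀)) + (Fp (c, τ₀) * ρ' + 0) = u0 * Q τ₀ := by
    rw [hval]
    have hθ0 : θ (c, τ₀) = 0 := hθf τ₀ ⟨hτ0, hτe⟩
    have hFpval : Fp (c, τ₀) = u (c, τ₀) * (1 - c)^2 := by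
      show (u (c, τ₀) + η * θ (c, τ₀)) * (1 - c)^2 = _
      rw [hθ0]; ring
    rw [hFpval, hQτ]; ring
  rw [← hvaltot]
  exact htotal
end

section
/- Let σ > 0, τ_e = 1/(6σ), let ρ_f : [0, τ_e] → [0,1] be the continuous strictly increasing function satisfying (3ρ_f(τ)² − 2ρ_f(τ)³)/(6σ) = τ, and let Q(τ) = (1 − ρ_f(τ))² ρ_f'(τ). Suppose u, θ, η, d, u⁰ satisfy hypotheses (i)–(iv) of the mass-balance lemma (the convection-reaction-diffusion equation with Danckwerts condition at ρ = 0, Neumann condition and θ = 0 at the moving front), and define M₁(τ) = u⁰ ∫₀^τ Q(ξ) dξ and M₂(τ) = ∫₀^{ρ_f(τ)} [u(ξ,τ) + η θ(ξ,τ)] (1 − ξ)² dξ. If M₂ is continuous at 0 with M₂(0) = 0, then M₁(τ) = M₂(τ) for all τ ∈ [0, τ_e). -/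
open MeasureTheory intervalIntegral Set Filter Topology Asymptotics Metric

private lemma slice_snd {f : ℝ × ℝ → ℝ} (hf : Differentiable ℝ f) (ξ t₀ : ℝ) :
    HasDerivAt (fun t => f (ξ, t)) (fderiv ℝ f (ξ, t₀) (0, 1)) t₀ := by
  have h1 : HasDerivAt (fun t : ℝ => (ξ, t)) ((0 : ℝ), (1 : ℝ)) t₀ :=
    (hasDerivAt_const t₀ ξ).prodMk (hasDerivAt_id t₀)
  exact (hf (ξ, t₀)).hasFDerivAt.comp_hasDerivAt t₀ h1

private lemma slice_fst {f : ℝ × ℝ → ℝ} (hf : Differentiable ℝ f) (ξ t₀ : ℝ) :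
    HasDerivAt (fun r => f (r, t₀)) (fderiv ℝ f (ξ, t₀) (1, 0)) ξ := by
  have h1 : HasDerivAt (fun r : ℝ => (r, t₀)) ((1 : ℝ), (0 : ℝ)) ξ :=
    (hasDerivAt_id ξ).prodMk (hasDerivAt_const ξ t₀)
  exact (hf (ξ, t₀)).hasFDerivAt.comp_hasDerivAt ξ h1

private lemma cont_D {f : ℝ × ℝ → ℝ} (hf : ContDiff ℝ 1 f) (v : ℝ × ℝ) :
    Continuous (fun p => fderiv ℝ f p v) :=
  (hf.continuous_fderiv one_ne_zero).clm_apply continuous_const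

private lemma leibniz_param {f : ℝ × ℝ → ℝ} (hf : ContDiff ℝ 1 f) (a b τ₀ : ℝ) :
    HasDerivAt (fun t => ∫ ξ in a..b, f (ξ, t))
      (∫ ξ in a..b, fderiv ℝ f (ξ, τ₀) (0, 1)) τ₀ := by
  have hDc : Continuous (fun p : ℝ × ℝ => fderiv ℝ f p ((0 : ℝ), (1 : ℝ))) :=
    (hf.continuous_fderiv one_ne_zero).clm_apply continuous_const
  have hK : IsCompact ((uIcc a b) ×ˢ (Icc (τ₀ - 1) (τ₀ + 1))) :=
    isCompact_uIcc.prod isCompact_Icc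
  obtain ⟨C, hC⟩ := hK.exists_bound_of_continuousOn hDc.continuousOn
  have main := intervalIntegral.hasDerivAt_integral_of_dominated_loc_of_deriv_le
    (F := fun t ξ => f (ξ, t)) (F' := fun t ξ => fderiv ℝ f (ξ, t) ((0:ℝ), (1:ℝ)))
    (a := a) (b := b) (μ := volume) (x₀ := τ₀) (bound := fun _ => C)
    (s := ball τ₀ 1) (ball_mem_nhds τ₀ one_pos)
    (Eventually.of_forall fun t =>
      (hf.continuous.comp (continuous_id.prodMk continuous_const)).aestronglyMeasurable)
    ((hf.continuous.comp (continuous_id.prodMk continuous_const)).intervalIntegrable a b)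
    ((hDc.comp (continuous_id.prodMk continuous_const)).aestronglyMeasurable)
    (Eventually.of_forall fun ξ hξ x hx => by
      have : (ξ, x) ∈ (uIcc a b) ×ˢ (Icc (τ₀ - 1) (τ₀ + 1)) := by
        constructor
        · exact uIoc_subset_uIcc hξ
        · have := mem_ball_iff_norm.mp hx
          rw [Real.norm_eq_abs, abs_sub_lt_iff] at this
          constructor <;> linarith [this.1, this.2]
      exact hC _ this)
    (intervalIntegrable_const)
    (Eventually.of_forall fun ξ hξ x hx => by
      have h1 : HasDerivAt (fun t : ℝ => (ξ, t)) ((0 : ℝ), (1 : ℝ)) x :=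
        (hasDerivAt_const x ξ).prodMk (hasDerivAt_id x)
      exact ((hf.differentiable one_ne_zero) (ξ, x)).hasFDerivAt.comp_hasDerivAt x h1)
  exact main.2

private lemma leibniz_endpoint {f : ℝ × ℝ → ℝ} (hf : Continuous f) {r : ℝ → ℝ} {r' τ₀ : ℝ}
    (hr : HasDerivAt r r' τ₀) :
    HasDerivAt (fun t => ∫ ξ in (r τ₀)..(r t), f (ξ, t)) (f (r τ₀, τ₀) * r') τ₀ := by
  set a₀ := r τ₀ with ha₀
  set c := f (a₀, τ₀) with hc
  rw [hasDerivAt_iff_isLittleO]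
  have hsplit : ∀ t : ℝ, (∫ ξ in a₀..r t, f (ξ, t)) =
      (∫ ξ in a₀..r t, (f (ξ, t) - c)) + c * (r t - a₀) := by
    intro t
    have h1 : IntervalIntegrable (fun ξ => f (ξ, t)) volume a₀ (r t) :=
      (hf.comp (continuous_id.prodMk continuous_const)).intervalIntegrable _ _
    have h2 : IntervalIntegrable (fun _ : ℝ => c) volume a₀ (r t) :=
      intervalIntegrable_const
    rw [intervalIntegral.integral_sub h1 h2, intervalIntegral.integral_const]
    ring_nf
  have key : (fun t => (∫ ξ in a₀..r t, (f (ξ, t) - c))) =o[𝓝 τ₀] fun t => t - τ₀ := by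
    obtain ⟨C, hC0, hC⟩ := hr.isBigO_sub.exists_pos
    rw [isLittleO_iff]
    intro ε hε
    have hε' : 0 < ε / C := div_pos hε hC0
    obtain ⟨δ, hδ0, hδ⟩ := Metric.continuousAt_iff.1 hf.continuousAt (ε / C) hε'
    have h1 : ∀ᶠ t in 𝓝 τ₀, r t ∈ Metric.ball a₀ δ :=
      hr.continuousAt (Metric.ball_mem_nhds _ hδ0)
    have h2 : ∀ᶠ t in 𝓝 τ₀, t ∈ Metric.ball τ₀ δ :=
      eventually_of_mem (Metric.ball_mem_nhds _ hδ0) (fun _ h => h)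
    filter_upwards [hC.bound, h1, h2] with t hbound hrt ht
    have hnormle : ∀ ξ ∈ uIoc a₀ (r t), ‖f (ξ, t) - c‖ ≤ ε / C := by
      intro ξ hξ
      have hξ1 : min a₀ (r t) < ξ := hξ.1
      have hξ2 : ξ ≤ max a₀ (r t) := hξ.2
      have habs : |ξ - a₀| ≤ |r t - a₀| := by
        rcases le_total a₀ (r t) with h | h
        · rw [min_eq_left h] at hξ1; rw [max_eq_right h] at hξ2
          rw [abs_of_nonneg (by linarith), abs_of_nonneg (by linarith)]; linarith
        · rw [min_eq_right h] at hξ1; rw [max_eq_left h] at hξ2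
          rw [abs_of_nonpos (by linarith), abs_of_nonpos (by linarith)]; linarith
      have hdist : dist (ξ, t) (a₀, τ₀) < δ := by
        rw [Prod.dist_eq]
        apply max_lt
        · rw [Real.dist_eq]
          calc |ξ - a₀| ≤ |r t - a₀| := habs
            _ < δ := by rw [Metric.mem_ball, Real.dist_eq] at hrt; exact hrt
        · rw [Metric.mem_ball] at ht; exact ht
      have := hδ hdist
      rw [Real.dist_eq] at this
      exact le_of_lt (by simpa [c] using this)
    calc ‖∫ ξ in a₀..r t, (f (ξ, t) - c)‖ ≤ (ε / C) * |r t - a₀| :=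
          intervalIntegral.norm_integral_le_of_norm_le_const hnormle
      _ ≤ (ε / C) * (C * ‖t - τ₀‖) := by
          apply mul_le_mul_of_nonneg_left _ (le_of_lt hε')
          simpa [Real.norm_eq_abs] using hbound
      _ = ε * ‖t - τ₀‖ := by field_simp
  have key2 : (fun t => c * (r t - a₀) - (t - τ₀) * (c * r')) =o[𝓝 τ₀] fun t => t - τ₀ := by
    have := (hasDerivAt_iff_isLittleO.mp hr).const_mul_left c
    apply this.congr_left
    intro t
    simp only [smul_eq_mul]
    ring
  have := key.add key2
  apply this.congr_left
  intro t
  rw [hsplit t]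
  simp only [← ha₀, intervalIntegral.integral_same, smul_eq_mul]
  ring

private lemma leibniz_full {f : ℝ × ℝ → ℝ} (hf : ContDiff ℝ 1 f) {r : ℝ → ℝ} {r' τ₀ : ℝ}
    (hr : HasDerivAt r r' τ₀) (a : ℝ) :
    HasDerivAt (fun t => ∫ ξ in a..r t, f (ξ, t))
      (f (r τ₀, τ₀) * r' + ∫ ξ in a..r τ₀, fderiv ℝ f (ξ, τ₀) (0, 1)) τ₀ := by
  have h1 := leibniz_param hf a (r τ₀) τ₀
  have h2 := leibniz_endpoint hf.continuous hr
  have hsum := h2.add h1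
  have heqfun : (fun t => (∫ ξ in (r τ₀)..(r t), f (ξ, t)) + ∫ ξ in a..(r τ₀), f (ξ, t)) =
      (fun t => ∫ ξ in a..r t, f (ξ, t)) := by
    funext t
    rw [add_comm]
    exact intervalIntegral.integral_add_adjacent_intervals
      ((hf.continuous.comp (continuous_id.prodMk continuous_const)).intervalIntegrable _ _)
      ((hf.continuous.comp (continuous_id.prodMk continuous_const)).intervalIntegrable _ _)
  rw [← heqfun]; exact hsum

/-- mass balance: under hypotheses (i)–(iv) of the mass-balance lemma,
with M₁(τ) = u⁰ ∫₀^τ Q and M₂(τ) = ∫₀^{ρ_f(τ)} [u + ηθ](1 − ξ)² dξ, if M₂ is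
continuous at 0 with M₂(0) = 0, then M₁(τ) = M₂(τ) for all τ ∈ [0, τ_e). -/
theorem mass_balance (σ : ℝ) (hσ : 0 < σ) (ρf : ℝ → ℝ)
    (hcont : ContinuousOn ρf (Set.Icc 0 (1 / (6 * σ))))
    (hmono : StrictMonoOn ρf (Set.Icc 0 (1 / (6 * σ))))
    (hmaps : Set.MapsTo ρf (Set.Icc 0 (1 / (6 * σ))) (Set.Icc 0 1))
    (heq : ∀ τ ∈ Set.Icc (0 : ℝ) (1 / (6 * σ)),
      (3 * (ρf τ) ^ 2 - 2 * (ρf τ) ^ 3) / (6 * σ) = τ)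
    (Q : ℝ → ℝ)
    (hQ : ∀ τ ∈ Set.Ioo (0 : ℝ) (1 / (6 * σ)),
      Q τ = (1 - ρf τ) ^ 2 * deriv ρf τ)
    (η d u0 : ℝ) (hη : 0 ≤ η) (hd : 0 < d)
    (u θ : ℝ × ℝ → ℝ) (hu : ContDiff ℝ 2 u) (hθ : ContDiff ℝ 2 θ)
    -- (i) the convection-reaction-diffusion equation in the wet region
    (hpde : ∀ τ ∈ Set.Ioo (0 : ℝ) (1 / (6 * σ)), ∀ ρ ∈ Set.Ioo (0 : ℝ) (ρf τ),
      (1 - ρ) ^ 2 * deriv (fun t => u (ρ, t) + η * θ (ρ, t)) τ =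
        -Q τ * deriv (fun r => u (r, τ)) ρ +
          d * deriv (fun r => (1 - r) ^ 2 * deriv (fun r' => u (r', τ)) r) ρ)
    -- (ii) Danckwerts boundary condition at ρ = 0
    (hbc0 : ∀ τ ∈ Set.Ioo (0 : ℝ) (1 / (6 * σ)),
      d * deriv (fun r => u (r, τ)) 0 = Q τ * (u (0, τ) - u0))
    -- (iii) Neumann condition at the liquid front
    (hbcf : ∀ τ ∈ Set.Ioo (0 : ℝ) (1 / (6 * σ)),
      deriv (fun r => u (r, τ)) (ρf τ) = 0)
    -- (iv) no adsorbed species at the liquid front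
    (hθf : ∀ τ ∈ Set.Ioo (0 : ℝ) (1 / (6 * σ)), θ (ρf τ, τ) = 0)
    (M₁ M₂ : ℝ → ℝ)
    (hM₁ : ∀ τ, M₁ τ = u0 * ∫ ξ in (0 : ℝ)..τ, Q ξ)
    (hM₂ : ∀ τ, M₂ τ = ∫ ξ in (0 : ℝ)..(ρf τ),
      (u (ξ, τ) + η * θ (ξ, τ)) * (1 - ξ) ^ 2)
    (hM₂cont : ContinuousWithinAt M₂ (Set.Ici 0) 0)
    (hM₂0 : M₂ 0 = 0) :
    ∀ τ ∈ Set.Ico (0 : ℝ) (1 / (6 * σ)), M₁ τ = M₂ τ := by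
  set τe := 1 / (6 * σ) with hτe_def
  have hτe : 0 < τe := by positivity
  have h6 : (0:ℝ) < 6 * σ := by positivity
  have hkey : ∀ t ∈ Ioo (0:ℝ) τe, 3 * ρf t ^ 2 - 2 * ρf t ^ 3 = 6 * σ * t := by
    intro t ht
    have he := heq t ⟨ht.1.le, ht.2.le⟩
    field_simp at he
    linarith
  have hmem : ∀ t ∈ Ioo (0:ℝ) τe, ρf t ∈ Ioo (0:ℝ) 1 := by
    intro t ht
    have hm := hmaps (⟨ht.1.le, ht.2.le⟩ : t ∈ Icc 0 τe)
    have heq' := hkey t ht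
    constructor
    · rcases hm.1.lt_or_eq with h | h
      · exact h
      · exfalso; rw [← h] at heq'; simp at heq'; rcases heq' with h' | h' <;> linarith [ht.1]
    · rcases hm.2.lt_or_eq with h | h
      · exact h
      · exfalso
        rw [h] at heq'
        have : t = τe := by rw [hτe_def]; field_simp; linarith
        linarith [ht.2]
  have hρf_deriv : ∀ t ∈ Ioo (0:ℝ) τe,
      HasDerivAt ρf ((ρf t * (1 - ρf t) / σ)⁻¹) t := by
    intro t ht
    have hmem' := hmem t ht
    have hIcc_nhds : Icc (0:ℝ) τe ∈ 𝓝 t := Icc_mem_nhds ht.1 ht.2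
    have hg : ContinuousAt ρf t := hcont.continuousAt hIcc_nhds
    have hfd : HasDerivAt (fun x : ℝ => (3 * x ^ 2 - 2 * x ^ 3) / (6 * σ))
        (ρf t * (1 - ρf t) / σ) (ρf t) := by
      have h1 : HasDerivAt (fun x : ℝ => 3 * x ^ 2 - 2 * x ^ 3)
          (3 * (↑2 * ρf t ^ 1) - 2 * (↑3 * ρf t ^ 2)) (ρf t) :=
        ((hasDerivAt_pow 2 _).const_mul 3).sub ((hasDerivAt_pow 3 _).const_mul 2)
      have h2 := h1.div_const (6 * σ)
      refine h2.congr_deriv ?_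
      push_cast
      ring
    have hne : ρf t * (1 - ρf t) / σ ≠ 0 :=
      ne_of_gt (div_pos (mul_pos hmem'.1 (by linarith [hmem'.2])) hσ)
    exact HasDerivAt.of_local_left_inverse hg hfd hne
      (eventually_of_mem hIcc_nhds (fun y hy => heq y hy))
  have hQval : ∀ t ∈ Ioo (0:ℝ) τe, Q t = σ * (1 - ρf t) / ρf t := by
    intro t ht
    have h1 : 0 < ρf t := (hmem t ht).1
    have h2 : ρf t < 1 := (hmem t ht).2
    have hza : ρf t ≠ 0 := ne_of_gt h1
    have hzb : (1 : ℝ) - ρf t ≠ 0 := ne_of_gt (by linarith)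
    rw [hQ t ht, (hρf_deriv t ht).deriv, inv_div]
    field_simp
  have hQcontOn : ContinuousOn (fun t => σ * (1 - ρf t) / ρf t) (Ioo 0 τe) := by
    apply ContinuousOn.div
    · exact continuousOn_const.mul (continuousOn_const.sub (hcont.mono Ioo_subset_Icc_self))
    · exact hcont.mono Ioo_subset_Icc_self
    · intro t ht; exact ne_of_gt (hmem t ht).1
  have hQsqrt : ∀ t ∈ Ioo (0:ℝ) τe, Real.sqrt (2 * σ * t) ≤ ρf t := by
    intro t ht
    have heq' := hkey t ht
    have h2 : 2 * σ * t ≤ ρf t ^ 2 := by nlinarith [(hmem t ht).1, (hmem t ht).2]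
    calc Real.sqrt (2 * σ * t) ≤ Real.sqrt (ρf t ^ 2) := Real.sqrt_le_sqrt h2
      _ = ρf t := Real.sqrt_sq (hmem t ht).1.le
  have hQint : ∀ T ∈ Ioo (0:ℝ) τe, IntervalIntegrable Q volume 0 T := by
    intro T hT
    have hsub : uIoc (0:ℝ) T = Ioc 0 T := uIoc_of_le hT.1.le
    have hsub2 : Ioc (0:ℝ) T ⊆ Ioo 0 τe := fun x hx => ⟨hx.1, lt_of_le_of_lt hx.2 hT.2⟩
    have hmeas : AEStronglyMeasurable Q (volume.restrict (uIoc 0 T)) := by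
      rw [hsub]
      apply AEStronglyMeasurable.congr
        (((hQcontOn.mono hsub2)).aestronglyMeasurable measurableSet_Ioc)
      filter_upwards [ae_restrict_mem measurableSet_Ioc] with x hx
      exact (hQval x (hsub2 hx)).symm
    have hbd : IntervalIntegrable (fun t => (σ / Real.sqrt (2 * σ)) * t ^ (-(1/2) : ℝ))
        volume 0 T := (intervalIntegrable_rpow' (by norm_num)).const_mul _
    apply hbd.mono_fun hmeas
    rw [hsub]
    filter_upwards [ae_restrict_mem measurableSet_Ioc] with x hx
    have hx' := hsub2 hx
    have h1 : 0 < ρf x := (hmem x hx').1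
    have h2 : ρf x < 1 := (hmem x hx').2
    have hx0 : 0 < x := hx'.1
    have hsq2σ : 0 < Real.sqrt (2 * σ) := Real.sqrt_pos.2 (by positivity)
    have hsqx : 0 < Real.sqrt x := Real.sqrt_pos.2 hx0
    have hrpow : x ^ (-(1/2) : ℝ) = (Real.sqrt x)⁻¹ := by
      rw [Real.rpow_neg hx0.le, ← Real.sqrt_eq_rpow]
    have hRHSval : (σ / Real.sqrt (2 * σ)) * x ^ (-(1/2) : ℝ) = σ / Real.sqrt (2 * σ * x) := by
      rw [hrpow, Real.sqrt_mul (by positivity : (0:ℝ) ≤ 2 * σ),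
        ← div_div]
      ring
    have hQx : Q x = σ * (1 - ρf x) / ρf x := hQval x hx'
    have hsqstep := hQsqrt x hx'
    have hsq2σx : 0 < Real.sqrt (2 * σ * x) := Real.sqrt_pos.2 (by positivity)
    have hle : Q x ≤ σ / Real.sqrt (2 * σ * x) := by
      rw [hQx]
      calc σ * (1 - ρf x) / ρf x ≤ σ / ρf x := (div_le_div_iff_of_pos_right h1).mpr (by nlinarith)
        _ ≤ σ / Real.sqrt (2 * σ * x) := div_le_div_of_nonneg_left hσ.le hsq2σx hsqstep
    have hQnn : 0 ≤ Q x := by rw [hQx]; exact div_nonneg (by nlinarith) h1.le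
    rw [Real.norm_eq_abs, Real.norm_eq_abs, abs_of_nonneg hQnn,
      abs_of_nonneg (mul_nonneg (by positivity) (Real.rpow_nonneg hx0.le _)), hRHSval]
    exact hle
  -- smoothness facts
  have hudiff : Differentiable ℝ u := hu.differentiable two_ne_zero
  have hθdiff : Differentiable ℝ θ := hθ.differentiable two_ne_zero
  have hf1 : ContDiff ℝ 1 (fun p : ℝ × ℝ => (u p + η * θ p) * (1 - p.1) ^ 2) :=
    ((hu.of_le one_le_two).add (contDiff_const.mul (hθ.of_le one_le_two))).mul
      ((contDiff_const.sub contDiff_fst).pow 2)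
  have hVf : ContDiff ℝ 1 (fun p : ℝ × ℝ => (1 - p.1) ^ 2 * fderiv ℝ u p (1, 0)) :=
    ((contDiff_const.sub contDiff_fst).pow 2).mul
      ((hu.fderiv_right (by norm_num)).clm_apply contDiff_const)
  have hVfdiff : Differentiable ℝ (fun p : ℝ × ℝ => (1 - p.1) ^ 2 * fderiv ℝ u p (1, 0)) :=
    hVf.differentiable one_ne_zero
  -- derivative of M₂ (in lambda form)
  have hN₂d : ∀ t ∈ Ioo (0:ℝ) τe,
      HasDerivAt (fun s => ∫ ξ in (0:ℝ)..(ρf s), (u (ξ, s) + η * θ (ξ, s)) * (1 - ξ) ^ 2)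
        (u0 * Q t) t := by
    intro τ hτ'
    have hb := hmem τ hτ'
    have hrd := hρf_deriv τ hτ'
    set r' := (ρf τ * (1 - ρf τ) / σ)⁻¹ with hr'_def
    have hder := leibniz_full hf1 hrd 0
    have hQτR : Q τ = (1 - ρf τ) ^ 2 * r' := by rw [hQ τ hτ', hrd.deriv]
    -- boundary facts
    have hUb : fderiv ℝ u (ρf τ, τ) (1, 0) = 0 :=
      ((slice_fst hudiff (ρf τ) τ).deriv).symm.trans (hbcf τ hτ')
    have hU0d : d * fderiv ℝ u (0, τ) (1, 0) = Q τ * (u (0, τ) - u0) := by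
      rw [← (slice_fst hudiff 0 τ).deriv]
      exact hbc0 τ hτ'
    have hθb : θ (ρf τ, τ) = 0 := hθf τ hτ'
    -- the integral of the time-derivative
    have hIcongr : (∫ ξ in (0:ℝ)..(ρf τ),
        fderiv ℝ (fun p : ℝ × ℝ => (u p + η * θ p) * (1 - p.1) ^ 2) (ξ, τ) (0, 1)) =
        ∫ ξ in (0:ℝ)..(ρf τ), (-Q τ * fderiv ℝ u (ξ, τ) (1, 0) +
          d * fderiv ℝ (fun p : ℝ × ℝ => (1 - p.1) ^ 2 * fderiv ℝ u p (1, 0)) (ξ, τ) (1, 0)) := by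
      apply intervalIntegral.integral_congr_ae
      have hne : ∀ᵐ ξ : ℝ, ξ ≠ ρf τ := by
        refine ae_iff.2 ?_
        simp only [not_not]
        have : {x : ℝ | x = ρf τ} = {ρf τ} := by ext x; simp
        rw [this]
        exact measure_singleton _
      filter_upwards [hne] with ξ hξne hξmem
      rw [uIoc_of_le hb.1.le] at hξmem
      have hξIoo : ξ ∈ Ioo (0:ℝ) (ρf τ) := ⟨hξmem.1, hξmem.2.lt_of_ne hξne⟩
      -- LHS equals (1-ξ)^2 * ∂ₜ(u+ηθ)
      have hgt : HasDerivAt (fun t => u (ξ, t) + η * θ (ξ, t))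
          (fderiv ℝ u (ξ, τ) (0, 1) + η * fderiv ℝ θ (ξ, τ) (0, 1)) τ :=
        (slice_snd hudiff ξ τ).add ((slice_snd hθdiff ξ τ).const_mul η)
      have hLHS : fderiv ℝ (fun p : ℝ × ℝ => (u p + η * θ p) * (1 - p.1) ^ 2) (ξ, τ) (0, 1) =
          (fderiv ℝ u (ξ, τ) (0, 1) + η * fderiv ℝ θ (ξ, τ) (0, 1)) * (1 - ξ) ^ 2 :=
        (slice_snd (hf1.differentiable one_ne_zero) ξ τ).unique (hgt.mul_const ((1 - ξ) ^ 2))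
      have hderiv_t : deriv (fun t => u (ξ, t) + η * θ (ξ, t)) τ =
          fderiv ℝ u (ξ, τ) (0, 1) + η * fderiv ℝ θ (ξ, τ) (0, 1) := hgt.deriv
      have hpde' := hpde τ hτ' ξ hξIoo
      rw [hderiv_t] at hpde'
      -- convert the ρ-derivatives in the PDE
      have hd1 : deriv (fun r => u (r, τ)) ξ = fderiv ℝ u (ξ, τ) (1, 0) :=
        (slice_fst hudiff ξ τ).deriv
      have hfe : (fun r => (1 - r) ^ 2 * deriv (fun r' => u (r', τ)) r) =
          (fun r => (1 - r) ^ 2 * fderiv ℝ u (r, τ) (1, 0)) := by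
        funext r
        rw [(slice_fst hudiff r τ).deriv]
      have hd2 : deriv (fun r => (1 - r) ^ 2 * deriv (fun r' => u (r', τ)) r) ξ =
          fderiv ℝ (fun p : ℝ × ℝ => (1 - p.1) ^ 2 * fderiv ℝ u p (1, 0)) (ξ, τ) (1, 0) := by
        rw [hfe]
        exact (slice_fst hVfdiff ξ τ).deriv
      rw [hd1, hd2] at hpde'
      rw [hLHS, ← hpde']
      ring
    -- evaluate the integral by FTC
    have hcontU : Continuous (fun ξ : ℝ => fderiv ℝ u (ξ, τ) (1, 0)) :=
      (cont_D (hu.of_le one_le_two) _).comp (continuous_id.prodMk continuous_const)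
    have hcontW : Continuous (fun ξ : ℝ =>
        fderiv ℝ (fun p : ℝ × ℝ => (1 - p.1) ^ 2 * fderiv ℝ u p (1, 0)) (ξ, τ) (1, 0)) :=
      (cont_D hVf _).comp (continuous_id.prodMk continuous_const)
    have hI1 : (∫ ξ in (0:ℝ)..(ρf τ), fderiv ℝ u (ξ, τ) (1, 0)) = u (ρf τ, τ) - u (0, τ) :=
      intervalIntegral.integral_eq_sub_of_hasDerivAt
        (fun ξ _ => slice_fst hudiff ξ τ) (hcontU.intervalIntegrable _ _)
    have hI2 : (∫ ξ in (0:ℝ)..(ρf τ),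
        fderiv ℝ (fun p : ℝ × ℝ => (1 - p.1) ^ 2 * fderiv ℝ u p (1, 0)) (ξ, τ) (1, 0)) =
        (1 - ρf τ) ^ 2 * fderiv ℝ u (ρf τ, τ) (1, 0) -
          (1 - (0:ℝ)) ^ 2 * fderiv ℝ u (0, τ) (1, 0) :=
      intervalIntegral.integral_eq_sub_of_hasDerivAt
        (fun ξ _ => slice_fst hVfdiff ξ τ) (hcontW.intervalIntegrable _ _)
    have hIsum : (∫ ξ in (0:ℝ)..(ρf τ), (-Q τ * fderiv ℝ u (ξ, τ) (1, 0) +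
          d * fderiv ℝ (fun p : ℝ × ℝ => (1 - p.1) ^ 2 * fderiv ℝ u p (1, 0)) (ξ, τ) (1, 0))) =
        -Q τ * (u (ρf τ, τ) - u (0, τ)) +
          d * ((1 - ρf τ) ^ 2 * fderiv ℝ u (ρf τ, τ) (1, 0) -
            (1 - (0:ℝ)) ^ 2 * fderiv ℝ u (0, τ) (1, 0)) := by
      rw [intervalIntegral.integral_add
        ((hcontU.intervalIntegrable _ _).const_mul _)
        ((hcontW.intervalIntegrable _ _).const_mul _),
        intervalIntegral.integral_const_mul, intervalIntegral.integral_const_mul, hI1, hI2]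
    -- assemble the derivative value
    have hval : (fun p : ℝ × ℝ => (u p + η * θ p) * (1 - p.1) ^ 2) (ρf τ, τ) * r' +
        (∫ ξ in (0:ℝ)..(ρf τ),
          fderiv ℝ (fun p : ℝ × ℝ => (u p + η * θ p) * (1 - p.1) ^ 2) (ξ, τ) (0, 1)) =
        u0 * Q τ := by
      rw [hIcongr, hIsum]
      simp only [hθb, hUb]
      rw [hQτR] at hU0d ⊢
      nlinarith [hU0d]
    rw [hval] at hder
    exact hder
  -- derivative of M₁ (in lambda form)
  have hN₁d : ∀ t ∈ Ioo (0:ℝ) τe,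
      HasDerivAt (fun s => u0 * ∫ ξ in (0:ℝ)..s, Q ξ) (u0 * Q t) t := by
    intro t ht
    have hmeas : StronglyMeasurableAtFilter Q (𝓝 t) := by
      refine ⟨Ioo 0 τe, Ioo_mem_nhds ht.1 ht.2, ?_⟩
      apply AEStronglyMeasurable.congr (hQcontOn.aestronglyMeasurable measurableSet_Ioo)
      filter_upwards [ae_restrict_mem measurableSet_Ioo] with x hx
      exact (hQval x hx).symm
    have hca : ContinuousAt Q t := by
      apply ContinuousAt.congr (hQcontOn.continuousAt (Ioo_mem_nhds ht.1 ht.2))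
      filter_upwards [Ioo_mem_nhds ht.1 ht.2] with x hx
      exact (hQval x hx).symm
    exact (intervalIntegral.integral_hasDerivAt_right (hQint t ht) hmeas hca).const_mul u0
  -- the function F := M₁ - M₂ in lambda form
  set F : ℝ → ℝ := fun s => (u0 * ∫ ξ in (0:ℝ)..s, Q ξ) -
    ∫ ξ in (0:ℝ)..(ρf s), (u (ξ, s) + η * θ (ξ, s)) * (1 - ξ) ^ 2 with hF_def
  have hFd : ∀ t ∈ Ioo (0:ℝ) τe, HasDerivAt F 0 t := by
    intro t ht
    have := (hN₁d t ht).sub (hN₂d t ht)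
    simp at this; exact this
  have hconst : ∀ s ∈ Ioo (0:ℝ) τe, ∀ t ∈ Ioo (0:ℝ) τe, s ≤ t → F t = F s := by
    intro s hs t ht hst
    have hsubI : Icc s t ⊆ Ioo (0:ℝ) τe := fun x hx => ⟨lt_of_lt_of_le hs.1 hx.1,
      lt_of_le_of_lt hx.2 ht.2⟩
    have := constant_of_has_deriv_right_zero (f := F) (a := s) (b := t)
      (fun x hx => ((hFd x (hsubI hx)).continuousAt).continuousWithinAt)
      (fun x hx => ((hFd x (hsubI (Ico_subset_Icc_self hx))).hasDerivWithinAt))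
    exact this t (right_mem_Icc.2 hst)
  intro τ hτ
  rw [hM₁ τ, hM₂ τ]
  rcases hτ.1.lt_or_eq with hτ0 | hτ0
  swap
  · -- τ = 0
    subst hτ0
    rw [hM₂ 0] at hM₂0
    rw [intervalIntegral.integral_same, mul_zero, hM₂0]
  · -- 0 < τ < τe
    have hτIoo : τ ∈ Ioo (0:ℝ) τe := ⟨hτ0, hτ.2⟩
    have hneBot : (𝓝[Ioo (0:ℝ) τ] (0:ℝ)).NeBot := by
      rw [← mem_closure_iff_nhdsWithin_neBot, closure_Ioo (ne_of_lt hτ0)]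
      exact ⟨le_refl 0, hτ0.le⟩
    have h1 : Tendsto F (𝓝[Ioo (0:ℝ) τ] 0) (𝓝 (F τ)) := by
      apply tendsto_const_nhds.congr'
      filter_upwards [self_mem_nhdsWithin] with s hs
      exact hconst s ⟨hs.1, hs.2.trans hτ.2⟩ τ hτIoo hs.2.le
    have h2 : Tendsto F (𝓝[Ioo (0:ℝ) τ] 0) (𝓝 0) := by
      have hN₁c : ContinuousWithinAt (fun s => ∫ ξ in (0:ℝ)..s, Q ξ) (Icc (0:ℝ) τ) 0 := by
        apply intervalIntegral.continuousWithinAt_primitive (measure_singleton 0)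
        rw [min_self, max_eq_right hτ0.le]
        exact hQint τ hτIoo
      have hT1 : Tendsto (fun s => u0 * ∫ ξ in (0:ℝ)..s, Q ξ) (𝓝[Ioo (0:ℝ) τ] 0) (𝓝 0) := by
        have := (hN₁c.mono Ioo_subset_Icc_self).tendsto
        rw [intervalIntegral.integral_same] at this
        simpa using (tendsto_const_nhds (x := u0)).mul this
      have hT2 : Tendsto (fun s => ∫ ξ in (0:ℝ)..(ρf s), (u (ξ, s) + η * θ (ξ, s)) * (1 - ξ) ^ 2)
          (𝓝[Ioo (0:ℝ) τ] 0) (𝓝 0) := by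
        have hM₂fun : M₂ = fun s => ∫ ξ in (0:ℝ)..(ρf s),
            (u (ξ, s) + η * θ (ξ, s)) * (1 - ξ) ^ 2 := funext hM₂
        have := hM₂cont.tendsto
        rw [hM₂0, hM₂fun] at this
        exact this.mono_left (nhdsWithin_mono 0 (fun x hx => hx.1.le))
      simpa using hT1.sub hT2
    have hFτ : F τ = 0 := tendsto_nhds_unique h1 h2
    have : F τ = (u0 * ∫ ξ in (0:ℝ)..τ, Q ξ) -
        ∫ ξ in (0:ℝ)..(ρf τ), (u (ξ, τ) + η * θ (ξ, τ)) * (1 - ξ) ^ 2 := rfl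
    rw [this] at hFτ
    linarith [hFτ]
end
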